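/- arXiv:1011.4698 — 2 statements merged into one kernel-verified Lean document; each statement's English description precedes it below -/
import Mathlib

section
/- One has I₂² + I·J₂ ⊆ I·I₂, the quotient (I₂² + I·J₂)/(I·J₂) is a 1-dimensional k-vector space generated by the class of y², and the quotient (I·I₂)/(I₂² + I·J₂) is a 1-dimensional k-vector space generated by the class of xy. (This is the local content of the exact sequence 0 → L⊗K → E⊗K → K² → 0 in the proof of the Lemma, which yields the necessary exact sequence 0 → L → E → K → 0 for C_{2,n} structures.) -/
/-!
Since `I₂ = J₂ + (y)` and `I = I₂ + (x)`, expanding products of ideals gives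
`I₂² + I·J₂ = I·J₂ + (y²)` and `I·I₂ = I₂² + I·J₂ + (xy)`. Every power series is a constant
modulo `I = (x, y, z)`, and `I` multiplies `y²` into `I·J₂` and `xy` into `I₂² + I·J₂`, so each
quotient is spanned over `k` by the one class. That class is nonzero because a weighted order
separates `y²` from `I·J₂` and `xy` from `I₂² + I·J₂`.
-/

set_option maxHeartbeats 1000000
/-- For ideals `B ⊆ A` of `R`, the image of `A` in `R ⧸ B`, viewed as a
`k`-submodule of `R ⧸ B`; this represents the subquotient `A/B`. -/
noncomputable def gradedPiece (k : Type) [Field k] {R : Type} [CommRing R] [Algebra k R]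
    (A B : Ideal R) : Submodule k (R ⧸ B) :=
  Submodule.restrictScalars k (A.map (Ideal.Quotient.mk B))

open Ideal

section IdealLattice

variable {R : Type*} [CommSemiring R]

theorem span_pair_union_eq_span_sq_pair_union_sup (x y : R) (S : Set R) :
    span ({x, y} ∪ S) = span ({x ^ 2, y} ∪ S) ⊔ span {x} := by
  have hx : span {x ^ 2} ≤ span {x} :=
    span_singleton_le_span_singleton.2 (dvd_pow_self x two_ne_zero)
  simp only [span_union, span_insert]
  conv_lhs => rw [← sup_eq_left.2 hx]
  ac_rfl

theorem span_sq_pair_union_eq_span_triple_union_sup (x y : R) (S : Set R) :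
    span ({x ^ 2, y} ∪ S) = span ({x ^ 2, x * y, y ^ 2} ∪ S) ⊔ span {y} := by
  have hxy : span {x * y} ≤ span {y} := span_singleton_le_span_singleton.2 (dvd_mul_left y x)
  have hy : span {y ^ 2} ≤ span {y} :=
    span_singleton_le_span_singleton.2 (dvd_pow_self y two_ne_zero)
  simp only [span_union, span_insert]
  conv_lhs => rw [← sup_eq_left.2 (sup_le hxy hy)]
  ac_rfl

variable {I I₂ J₂ : Ideal R} {x y : R}

theorem sq_add_mul_le_mul (hJ₂ : J₂ ≤ I₂) (hI₂ : I₂ ≤ I) : I₂ ^ 2 + I * J₂ ≤ I * I₂ :=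
  sup_le (sq I₂ ▸ mul_mono_left hI₂) (mul_mono_right hJ₂)

theorem sq_add_mul_eq_mul_sup_span_sq (hI₂ : I₂ = J₂ ⊔ span {y}) (hJ₂ : J₂ ≤ I) (hy : y ∈ I) :
    I₂ ^ 2 + I * J₂ = I * J₂ ⊔ span {y ^ 2} := by
  have hyI : span {y} ≤ I := (span_singleton_le_iff_mem _).2 hy
  apply le_antisymm
  · refine sup_le ?_ le_sup_left
    rw [sq, hI₂, Ideal.sup_mul, Ideal.mul_sup, Ideal.mul_sup, span_singleton_mul_span_singleton,
      ← sq y]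
    refine sup_le (sup_le ?_ ?_) (sup_le ?_ le_sup_right)
    · exact le_sup_of_le_left (mul_mono_left hJ₂)
    · exact le_sup_of_le_left ((mul_comm _ _).trans_le (mul_mono_left hyI))
    · exact le_sup_of_le_left (mul_mono_left hyI)
  · refine sup_le le_sup_right ((span_singleton_le_iff_mem _).2 (mem_sup_left (pow_mem_pow ?_ 2)))
    exact hI₂ ▸ mem_sup_right (mem_span_singleton_self y)

theorem mul_eq_sq_add_mul_sup_span_mul (hI : I = I₂ ⊔ span {x}) (hI₂ : I₂ = J₂ ⊔ span {y}) :
    I * I₂ = (I₂ ^ 2 + I * J₂) ⊔ span {x * y} := by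
  have hJ₂I₂ : J₂ ≤ I₂ := hI₂ ▸ le_sup_left
  have hI₂I : I₂ ≤ I := hI ▸ le_sup_left
  apply le_antisymm
  · have hyI₂ : y ∈ I₂ := hI₂ ▸ mem_sup_right (mem_span_singleton_self y)
    have hy : I * span {y} ≤ I₂ ^ 2 ⊔ span {x * y} := by
      rw [hI, Ideal.sup_mul, span_singleton_mul_span_singleton, sq]
      exact sup_le_sup_right (mul_mono_right ((span_singleton_le_iff_mem _).2 hyI₂)) _
    calc I * I₂ = I * J₂ ⊔ I * span {y} := by rw [← Ideal.mul_sup, ← hI₂]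
      _ ≤ _ := sup_le (le_sup_of_le_left le_sup_right) (hy.trans (sup_le_sup_right le_sup_left _))
  · have hxy : x * y ∈ I * I₂ := mul_mem_mul (hI ▸ mem_sup_right (mem_span_singleton_self x))
      (hI₂ ▸ mem_sup_right (mem_span_singleton_self y))
    exact sup_le (sq_add_mul_le_mul hJ₂I₂ hI₂I) ((span_singleton_le_iff_mem _).2 hxy)

end IdealLattice

section GradedPiece

variable {k : Type} [Field k] {R : Type} [CommRing R] [Algebra k R] {m B : Ideal R} {v : R}

theorem gradedPiece_sup_span_singleton (hm : ∀ q : R, ∃ c : k, q - algebraMap k R c ∈ m)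
    (hv : ∀ a ∈ m, a * v ∈ B) :
    gradedPiece k (B ⊔ span {v}) B = Submodule.span k {Ideal.Quotient.mk B v} := by
  rw [gradedPiece, Ideal.map_sup, map_quotient_self, bot_sup_eq, map_span, Set.image_singleton]
  apply le_antisymm
  · intro w hw
    obtain ⟨a, rfl⟩ := mem_span_singleton'.mp ((Submodule.restrictScalars_mem k _ _).1 hw)
    obtain ⟨q, rfl⟩ := Ideal.Quotient.mk_surjective a
    obtain ⟨c, hc⟩ := hm q
    have hqv : Ideal.Quotient.mk B q * Ideal.Quotient.mk B v = c • Ideal.Quotient.mk B v := by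
      rw [Algebra.smul_def, ← Ideal.Quotient.mk_algebraMap, ← map_mul, ← map_mul,
        Ideal.Quotient.mk_eq_mk_iff_sub_mem, ← sub_mul]
      exact hv _ hc
    rw [hqv]
    exact Submodule.smul_mem _ _ (Submodule.mem_span_singleton_self _)
  · rw [Submodule.span_le, Set.singleton_subset_iff]
    exact subset_span rfl

theorem finrank_gradedPiece_sup_span_singleton (hm : ∀ q : R, ∃ c : k, q - algebraMap k R c ∈ m)
    (hv : ∀ a ∈ m, a * v ∈ B) (hvB : v ∉ B) :
    Module.finrank k (gradedPiece k (B ⊔ span {v}) B) = 1 := by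
  rw [gradedPiece_sup_span_singleton hm hv]
  exact finrank_span_singleton (by rwa [Ne, Ideal.Quotient.eq_zero_iff_mem])

end GradedPiece

namespace MvPowerSeries

section Generators

variable {σ R : Type*} [CommSemiring R]

theorem mem_span_X_image_of_coeff_eq_zero (t : Finset σ) {f : MvPowerSeries σ R}
    (hf : ∀ d : σ →₀ ℕ, (∀ i ∈ t, d i = 0) → coeff d f = 0) :
    f ∈ span (X '' (t : Set σ)) := by
  classical
  induction t using Finset.induction_on generalizing f with
  | empty =>
    have : f = 0 := ext fun d => by simpa using hf d
    simp [this]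
  | insert a t _ ih =>
    let g : MvPowerSeries σ R := fun d => if d a = 0 then 0 else coeff d f
    let h : MvPowerSeries σ R := fun d => if d a = 0 then coeff d f else 0
    have hfgh : f = g + h := ext fun d => by
      change coeff d f = (if d a = 0 then 0 else coeff d f) + (if d a = 0 then coeff d f else 0)
      split_ifs <;> simp
    obtain ⟨g', hg'⟩ : X a ∣ g := X_dvd_iff.2 fun d hd => if_pos hd
    have hh : h ∈ span (X '' (t : Set σ)) := ih fun d hd => by
      change (if d a = 0 then coeff d f else 0) = 0
      split_ifs with hda
      · exact hf d (by simpa [hda] using hd)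
      · rfl
    rw [hfgh, hg']
    exact add_mem (mul_mem_right _ _ (subset_span ⟨a, by simp, rfl⟩))
      (span_mono (Set.image_mono (by simp)) hh)

theorem mem_span_range_X_of_constantCoeff_eq_zero [Finite σ] {f : MvPowerSeries σ R}
    (hf : constantCoeff f = 0) : f ∈ span (Set.range X) := by
  have := Fintype.ofFinite σ
  rw [← Set.image_univ, ← Finset.coe_univ]
  refine mem_span_X_image_of_coeff_eq_zero _ fun d hd => ?_
  rwa [show d = 0 from Finsupp.ext fun i => hd i (Finset.mem_univ i), coeff_zero_eq_constantCoeff]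

theorem sub_algebraMap_constantCoeff_mem_span_range_X {R : Type*} [CommRing R] [Finite σ]
    (f : MvPowerSeries σ R) : f - algebraMap R _ (constantCoeff f) ∈ span (Set.range X) :=
  mem_span_range_X_of_constantCoeff_eq_zero (by simp [← c_eq_algebraMap])

end Generators

section WeightedOrderIdeal

variable {σ R : Type*} [CommSemiring R] (w : σ → ℕ)

def weightedOrderIdeal (N : ℕ∞) : Ideal (MvPowerSeries σ R) where
  carrier := {f | N ≤ f.weightedOrder w}
  zero_mem' := by simp
  add_mem' ha hb := (le_min ha hb).trans (min_weightedOrder_le_add w)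
  smul_mem' _ _ hf := hf.trans (le_add_self.trans (le_weightedOrder_mul w))

variable {w}

theorem weightedOrderIdeal_antitone :
    Antitone (weightedOrderIdeal w : ℕ∞ → Ideal (MvPowerSeries σ R)) :=
  fun _ _ hMN _ hf => hMN.trans hf

theorem weightedOrderIdeal_mul_le (M N : ℕ∞) :
    weightedOrderIdeal w M * weightedOrderIdeal w N ≤
      (weightedOrderIdeal w (M + N) : Ideal (MvPowerSeries σ R)) :=
  mul_le.2 fun _ hf _ hg => (add_le_add hf hg).trans (le_weightedOrder_mul w)

theorem X_mem_weightedOrderIdeal (i : σ) :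
    (X i : MvPowerSeries σ R) ∈ weightedOrderIdeal w (w i) := by
  classical
  refine le_weightedOrder w fun d hd => ?_
  rw [coeff_X, if_neg]
  rintro rfl
  simp [Finsupp.weight_single] at hd

theorem X_mem_weightedOrderIdeal_of_le {N : ℕ∞} {i : σ} (h : N ≤ w i) :
    (X i : MvPowerSeries σ R) ∈ weightedOrderIdeal w N :=
  weightedOrderIdeal_antitone h (X_mem_weightedOrderIdeal i)

theorem X_mul_X_mem_weightedOrderIdeal_of_le {N : ℕ∞} {i j : σ} (h : N ≤ w i + w j) :
    (X i * X j : MvPowerSeries σ R) ∈ weightedOrderIdeal w N :=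
  weightedOrderIdeal_antitone h (weightedOrderIdeal_mul_le _ _
    (mul_mem_mul (X_mem_weightedOrderIdeal i) (X_mem_weightedOrderIdeal j)))

theorem notMem_weightedOrderIdeal_of_coeff_ne_zero {N : ℕ∞} {f : MvPowerSeries σ R} {d : σ →₀ ℕ}
    (hd : coeff d f ≠ 0) (hdN : (Finsupp.weight w d : ℕ∞) < N) : f ∉ weightedOrderIdeal w N :=
  fun hf => (hf.trans (weightedOrder_le w hd)).not_gt hdN

end WeightedOrderIdeal

end MvPowerSeries

section CuspidalModel

open MvPowerSeries

variable {k : Type} [Field k] {r : ℕ}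

/-- Weights `3, 4, 6` on `x = X 0`, `y = X 1` and the `z`'s: then `y²` has weight `8` while
`I·J₂` has weighted order `≥ 9`, and `xy` has weight `7` while `I₂² + I·J₂` has order `≥ 8`. -/
def cuspWeight (r : ℕ) : Fin (r + 2) → ℕ := Fin.cons 3 (Fin.cons 4 fun _ => 6)

theorem span_le_weightedOrderIdeal_three :
    span ({X 0, X 1} ∪
        Set.range fun j : Fin r => (X j.succ.succ : MvPowerSeries (Fin (r + 2)) k))
      ≤ weightedOrderIdeal (cuspWeight r) 3 := by
  simp only [span_le, Set.union_subset_iff, Set.insert_subset_iff, Set.singleton_subset_iff,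
    Set.range_subset_iff, SetLike.mem_coe]
  refine ⟨⟨?_, ?_⟩, fun j => ?_⟩ <;> apply X_mem_weightedOrderIdeal_of_le <;>
    norm_num [cuspWeight]

theorem span_le_weightedOrderIdeal_four :
    span ({X 0 ^ 2, X 1} ∪
        Set.range fun j : Fin r => (X j.succ.succ : MvPowerSeries (Fin (r + 2)) k))
      ≤ weightedOrderIdeal (cuspWeight r) 4 := by
  simp only [span_le, Set.union_subset_iff, Set.insert_subset_iff, Set.singleton_subset_iff,
    Set.range_subset_iff, SetLike.mem_coe, sq]
  refine ⟨⟨?_, ?_⟩, fun j => ?_⟩ <;>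
    (first
      | apply X_mul_X_mem_weightedOrderIdeal_of_le
      | apply X_mem_weightedOrderIdeal_of_le) <;>
    norm_num [cuspWeight]

theorem span_le_weightedOrderIdeal_six :
    span ({X 0 ^ 2, X 0 * X 1, X 1 ^ 2} ∪
        Set.range fun j : Fin r => (X j.succ.succ : MvPowerSeries (Fin (r + 2)) k))
      ≤ weightedOrderIdeal (cuspWeight r) 6 := by
  simp only [span_le, Set.union_subset_iff, Set.insert_subset_iff, Set.singleton_subset_iff,
    Set.range_subset_iff, SetLike.mem_coe, sq]
  refine ⟨⟨?_, ?_, ?_⟩, fun j => ?_⟩ <;>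
    (first
      | apply X_mul_X_mem_weightedOrderIdeal_of_le
      | apply X_mem_weightedOrderIdeal_of_le) <;>
    norm_num [cuspWeight]

theorem range_X_subset_pair_union :
    Set.range (X : Fin (r + 2) → MvPowerSeries (Fin (r + 2)) k) ⊆
      {X 0, X 1} ∪ Set.range fun j : Fin r => X j.succ.succ := by
  rintro _ ⟨i, rfl⟩
  cases i using Fin.cases with
  | zero => simp
  | succ i =>
    cases i using Fin.cases with
    | zero => simp
    | succ j => exact Or.inr ⟨j, rfl⟩

variable {I I₂ J₂ : Ideal (MvPowerSeries (Fin (r + 2)) k)}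

theorem X_one_sq_notMem_mul (hI : I ≤ weightedOrderIdeal (cuspWeight r) 3)
    (hJ₂ : J₂ ≤ weightedOrderIdeal (cuspWeight r) 6) : X 1 ^ 2 ∉ I * J₂ := fun h =>
  notMem_weightedOrderIdeal_of_coeff_ne_zero (d := Finsupp.single 1 2) (by simp [coeff_X_pow])
    (by norm_num [Finsupp.weight_single, cuspWeight])
    (weightedOrderIdeal_mul_le 3 6 (mul_mono hI hJ₂ h))

theorem X_zero_mul_X_one_notMem_sq_add_mul (hI : I ≤ weightedOrderIdeal (cuspWeight r) 3)
    (hI₂ : I₂ ≤ weightedOrderIdeal (cuspWeight r) 4)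
    (hJ₂ : J₂ ≤ weightedOrderIdeal (cuspWeight r) 6) :
    X 0 * X 1 ∉ I₂ ^ 2 + I * J₂ := by
  have hle : I₂ ^ 2 + I * J₂ ≤ weightedOrderIdeal (cuspWeight r) 8 := by
    refine sup_le ?_ ?_
    · rw [sq]
      exact (mul_mono hI₂ hI₂).trans (weightedOrderIdeal_mul_le 4 4)
    · exact (mul_mono hI hJ₂).trans ((weightedOrderIdeal_mul_le 3 6).trans
        (weightedOrderIdeal_antitone (by norm_num)))
  exact fun h => notMem_weightedOrderIdeal_of_coeff_ne_zero
    (d := Finsupp.single 0 1 + Finsupp.single 1 1) (by simp [X, monomial_mul_monomial])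
    (by norm_num [Finsupp.weight_single, cuspWeight]) (hle h)

end CuspidalModel

theorem stmt_9_general (k : Type) [Field k] (r : ℕ)
    (x y : MvPowerSeries (Fin (r + 2)) k) (z : Fin r → MvPowerSeries (Fin (r + 2)) k)
    (hx : x = MvPowerSeries.X 0) (hy : y = MvPowerSeries.X 1)
    (hz : ∀ i : Fin r, z i = MvPowerSeries.X i.succ.succ)
    (I I₂ J₂ : Ideal (MvPowerSeries (Fin (r + 2)) k))
    (hI : I = Ideal.span ({x, y} ∪ Set.range z))
    (hI₂ : I₂ = Ideal.span ({x ^ 2, y} ∪ Set.range z))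
    (hJ₂ : J₂ = Ideal.span ({x ^ 2, x * y, y ^ 2} ∪ Set.range z)) :
    I₂ ^ 2 + I * J₂ ≤ I * I₂ ∧
    (gradedPiece k (I₂ ^ 2 + I * J₂) (I * J₂) =
        Submodule.span k {Ideal.Quotient.mk (I * J₂) (y ^ 2)} ∧
      Module.finrank k (gradedPiece k (I₂ ^ 2 + I * J₂) (I * J₂)) = 1) ∧
    (gradedPiece k (I * I₂) (I₂ ^ 2 + I * J₂) =
        Submodule.span k {Ideal.Quotient.mk (I₂ ^ 2 + I * J₂) (x * y)} ∧
      Module.finrank k (gradedPiece k (I * I₂) (I₂ ^ 2 + I * J₂)) = 1) := by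
  obtain rfl : z = fun i => MvPowerSeries.X i.succ.succ := funext hz
  have hII₂ : I = I₂ ⊔ span {x} := hI ▸ hI₂ ▸ span_pair_union_eq_span_sq_pair_union_sup x y _
  have hI₂J₂ : I₂ = J₂ ⊔ span {y} :=
    hI₂ ▸ hJ₂ ▸ span_sq_pair_union_eq_span_triple_union_sup x y _
  have hJ₂I : J₂ ≤ I := hII₂ ▸ hI₂J₂ ▸ le_sup_left.trans le_sup_left
  have hyI : y ∈ I := hI ▸ subset_span (by simp)
  have hy2 : y ^ 2 ∈ J₂ := hJ₂ ▸ subset_span (by simp)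
  have hxy : x * y ∈ J₂ := hJ₂ ▸ subset_span (by simp)
  have hres (q : MvPowerSeries (Fin (r + 2)) k) : ∃ c : k, q - algebraMap k _ c ∈ I := by
    subst hI hx hy
    exact ⟨_, span_mono range_X_subset_pair_union
      (MvPowerSeries.sub_algebraMap_constantCoeff_mem_span_range_X q)⟩
  have hy2B : y ^ 2 ∉ I * J₂ := by
    subst hI hJ₂ hx hy
    exact X_one_sq_notMem_mul span_le_weightedOrderIdeal_three span_le_weightedOrderIdeal_six
  have hxyB : x * y ∉ I₂ ^ 2 + I * J₂ := by
    subst hI hI₂ hJ₂ hx hy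
    exact X_zero_mul_X_one_notMem_sq_add_mul span_le_weightedOrderIdeal_three
      span_le_weightedOrderIdeal_four span_le_weightedOrderIdeal_six
  refine ⟨sq_add_mul_le_mul (hI₂J₂ ▸ le_sup_left) (hII₂ ▸ le_sup_left), ?_, ?_⟩
  · have hv : ∀ a ∈ I, a * y ^ 2 ∈ I * J₂ := fun a ha => mul_mem_mul ha hy2
    rw [sq_add_mul_eq_mul_sup_span_sq hI₂J₂ hJ₂I hyI]
    exact ⟨gradedPiece_sup_span_singleton hres hv,
      finrank_gradedPiece_sup_span_singleton hres hv hy2B⟩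
  · have hv : ∀ a ∈ I, a * (x * y) ∈ I₂ ^ 2 + I * J₂ :=
      fun a ha => mem_sup_right (mul_mem_mul ha hxy)
    rw [mul_eq_sq_add_mul_sup_span_mul hII₂ hI₂J₂]
    exact ⟨gradedPiece_sup_span_singleton hres hv,
      finrank_gradedPiece_sup_span_singleton hres hv hxyB⟩

/-- In the local model of a `C_{2,n}` cuspidal structure: `I₂² + I·J₂ ⊆ I·I₂`,
`(I₂² + I·J₂)/(I·J₂)` is 1-dimensional generated by the class of `y²`, and
`(I·I₂)/(I₂² + I·J₂)` is 1-dimensional generated by the class of `xy`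
(local content of `0 → L⊗K → E⊗K → K² → 0`). -/
theorem stmt_9 (k : Type) [Field k] (n r : ℕ) (hn : 3 ≤ n)
    (x y : MvPowerSeries (Fin (r + 2)) k) (z : Fin r → MvPowerSeries (Fin (r + 2)) k)
    (hx : x = MvPowerSeries.X 0) (hy : y = MvPowerSeries.X 1)
    (hz : ∀ i : Fin r, z i = MvPowerSeries.X i.succ.succ)
    (I J I₂ J₂ : Ideal (MvPowerSeries (Fin (r + 2)) k))
    (hI : I = Ideal.span ({x, y} ∪ Set.range z))
    (hJ : J = Ideal.span ({y ^ 2 + x ^ n, x * y} ∪ Set.range z))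
    (hI₂ : I₂ = Ideal.span ({x ^ 2, y} ∪ Set.range z))
    (hJ₂ : J₂ = Ideal.span ({x ^ 2, x * y, y ^ 2} ∪ Set.range z)) :
    I₂ ^ 2 + I * J₂ ≤ I * I₂ ∧
    (gradedPiece k (I₂ ^ 2 + I * J₂) (I * J₂) =
        Submodule.span k {Ideal.Quotient.mk (I * J₂) (y ^ 2)} ∧
      Module.finrank k (gradedPiece k (I₂ ^ 2 + I * J₂) (I * J₂)) = 1) ∧
    (gradedPiece k (I * I₂) (I₂ ^ 2 + I * J₂) =
        Submodule.span k {Ideal.Quotient.mk (I₂ ^ 2 + I * J₂) (x * y)} ∧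
      Module.finrank k (gradedPiece k (I * I₂) (I₂ ^ 2 + I * J₂)) = 1) :=
  stmt_9_general k r x y z hx hy hz I I₂ J₂ hI hI₂ hJ₂
end

section
/- The quotient ring R/J is a finite-dimensional k-vector space of dimension n + 3, with basis given by the classes of 1, x, x², …, xⁿ, y, y². (Hence the local model of a cuspidal multiple structure of type C_{3,n} has multiplicity n + 3.) -/
/-!
Write `x = X a`, `y = X b` and `zᵢ` for the other variables. Since
`x^{n+1} = x(y³ + xⁿ) - y²·xy` and `y⁴ = y(y³ + xⁿ) - x^{n-1}·xy`, the ideal is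
`J = (y³ + xⁿ) + K` with `K = (x^{n+1}, xy, y⁴, zᵢ)` a monomial ideal. A power series lies in a
finitely generated monomial ideal exactly when every monomial of its support does, and the
monomials outside `K` are `1, x, …, xⁿ, y, y², y³`. So every `f` is congruent modulo `K` to a
combination of these, and `y³ ≡ -xⁿ` shows that `1, x, …, xⁿ, y, y²` span. Conversely, if
`g(y³ + xⁿ) + κ ∈ J` with `κ ∈ K`, its coefficients on those monomials all vanish except the ones
of `xⁿ` and `y³`, which both equal `g(0)`; a combination of `1, x, …, xⁿ, y, y²` has no `y³`
term, so if it lies in `J` it is zero.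
-/

open Finsupp

namespace MvPowerSeries

variable {σ R : Type*} [CommRing R]

/-- Finiteness of `s` is needed: with infinitely many variables, `∑ X i` has its support in the
ideal spanned by the `X i` without belonging to it. -/
theorem mem_ideal_span_monomial_image {f : MvPowerSeries σ R} {s : Finset (σ →₀ ℕ)} :
    f ∈ Ideal.span ((fun m => monomial m (1 : R)) '' s) ↔
      ∀ e, coeff e f ≠ 0 → ∃ m ∈ s, m ≤ e := by
  classical
  constructor
  · intro hf
    induction hf using Submodule.span_induction with
    | mem g hg =>
      obtain ⟨m, hm, rfl⟩ := hg
      intro e he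
      have hem : e = m := by
        by_contra h
        simp [coeff_monomial, h] at he
      exact ⟨m, hm, hem.ge⟩
    | zero => simp
    | add g h _ _ hg hh =>
      intro e he
      rw [map_add] at he
      by_cases hge : coeff e g = 0
      · exact hh e (by simpa [hge] using he)
      · exact hg e hge
    | smul c g _ hg =>
      intro e he
      rw [smul_eq_mul, coeff_mul] at he
      obtain ⟨p, hp, hne⟩ := Finset.exists_ne_zero_of_sum_ne_zero he
      obtain ⟨m, hm, hle⟩ := hg p.2 (right_ne_zero_of_mul hne)
      exact ⟨m, hm, hle.trans (Finset.HasAntidiagonal.antidiagonal.snd_le hp)⟩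
  · induction s using Finset.induction_on generalizing f with
    | empty =>
      intro hf
      have : f = 0 := ext fun e => by simpa using hf e
      simp [this]
    | insert m s _ ih =>
      intro hf
      let g : MvPowerSeries σ R := fun e => coeff (e + m) f
      have hcoeff : ∀ e, coeff e (monomial m 1 * g) = if m ≤ e then coeff e f else 0 := by
        intro e
        rw [coeff_monomial_mul]
        split_ifs with h
        · rw [one_mul]
          change coeff (e - m + m) f = _
          rw [tsub_add_cancel_of_le h]
        · rfl
      rw [Finset.coe_insert, Set.image_insert_eq, Ideal.span_insert, Submodule.mem_sup]
      refine ⟨monomial m 1 * g, Ideal.mul_mem_right _ _ (Ideal.mem_span_singleton_self _),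
        f - monomial m 1 * g, ih fun e he => ?_, add_sub_cancel _ _⟩
      rw [map_sub, hcoeff] at he
      split_ifs at he with hme
      · simp at he
      · obtain ⟨m', hm', hle⟩ := hf e (by simpa using he)
        rcases Finset.mem_insert.mp hm' with rfl | hm'
        · exact absurd hle hme
        · exact ⟨m', hm', hle⟩

noncomputable section Cusp

variable (a b : σ) (n : ℕ)

def cuspIdeal : Ideal (MvPowerSeries σ R) :=
  Ideal.span ({X b ^ 3 + X a ^ n, X a * X b} ∪ X '' {s | s ≠ a ∧ s ≠ b})

def cuspBasisExponent (i : Fin (n + 3)) : σ →₀ ℕ :=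
  if (i : ℕ) ≤ n then single a i else if (i : ℕ) = n + 1 then single b 1 else single b 2

def cuspStandardExponents [DecidableEq σ] : Finset (σ →₀ ℕ) :=
  (Finset.range (n + 1)).image (single a) ∪ (Finset.range 4).image (single b)

def cuspMonomialExponents [Fintype σ] [DecidableEq σ] : Finset (σ →₀ ℕ) :=
  {single a (n + 1), single a 1 + single b 1, single b 4} ∪
    (Finset.univ.filter fun s => s ≠ a ∧ s ≠ b).image (single · 1)

def cuspMonomialIdeal [Fintype σ] [DecidableEq σ] : Ideal (MvPowerSeries σ R) :=
  Ideal.span ((fun m => monomial m 1) '' ↑(cuspMonomialExponents a b n))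

variable {a b n}

theorem cuspBasisExponent_injective (hab : a ≠ b) :
    Function.Injective (cuspBasisExponent a b n) := by
  intro i j h
  have hi := i.isLt
  have hj := j.isLt
  unfold cuspBasisExponent at h
  apply Fin.ext
  split_ifs at h <;> simp [single_eq_single_iff, hab, hab.symm] at h <;> omega

theorem cuspBasisExponent_ne_single_three (hab : a ≠ b) (i : Fin (n + 3)) :
    cuspBasisExponent a b n i ≠ single b 3 := by
  unfold cuspBasisExponent
  split_ifs <;> simp [single_eq_single_iff, hab]

theorem mk_X_pow_three_eq_neg :
    Ideal.Quotient.mk (cuspIdeal a b n) (X b ^ 3 : MvPowerSeries σ R) =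
      -Ideal.Quotient.mk (cuspIdeal a b n) (X a ^ n : MvPowerSeries σ R) := by
  rw [← map_neg, Ideal.Quotient.eq, sub_neg_eq_add]
  exact Ideal.subset_span (Set.mem_union_left _ (Set.mem_insert _ _))

variable [DecidableEq σ]

theorem cuspBasisExponent_mem (i : Fin (n + 3)) :
    cuspBasisExponent a b n i ∈ cuspStandardExponents a b n := by
  unfold cuspBasisExponent cuspStandardExponents
  split_ifs with h h'
  · exact Finset.mem_union_left _ (Finset.mem_image_of_mem _ (Finset.mem_range.2 (by omega)))
  all_goals exact Finset.mem_union_right _ (Finset.mem_image_of_mem _ (by simp))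

theorem exists_cuspBasisExponent_eq {e : σ →₀ ℕ} (he : e ∈ cuspStandardExponents a b n)
    (he3 : e ≠ single b 3) : ∃ i, cuspBasisExponent a b n i = e := by
  simp only [cuspStandardExponents, Finset.mem_union, Finset.mem_image, Finset.mem_range] at he
  rcases he with ⟨j, hj, rfl⟩ | ⟨j, hj, rfl⟩
  · exact ⟨⟨j, by omega⟩, if_pos (Nat.lt_succ_iff.1 hj)⟩
  · interval_cases j
    · exact ⟨⟨0, by omega⟩, by simp [cuspBasisExponent]⟩
    · exact ⟨⟨n + 1, by omega⟩, by simp [cuspBasisExponent]⟩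
    · exact ⟨⟨n + 2, by omega⟩, by simp [cuspBasisExponent]⟩
    · exact absurd rfl he3

theorem coeff_mul_X_pow_three_add_X_pow (hab : a ≠ b) (hn : 1 ≤ n) (g : MvPowerSeries σ R)
    {e : σ →₀ ℕ} (he : e ∈ cuspStandardExponents a b n) :
    coeff e (g * (X b ^ 3 + X a ^ n)) =
      if e = single b 3 ∨ e = single a n then constantCoeff g else 0 := by
  rw [mul_add, map_add, X_pow_eq, X_pow_eq, coeff_mul_monomial, coeff_mul_monomial]
  simp only [cuspStandardExponents, Finset.mem_union, Finset.mem_image, Finset.mem_range] at he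
  have hn0 : n ≠ 0 := by omega
  rcases he with ⟨j, hj, rfl⟩ | ⟨j, hj, rfl⟩
  · have h3 : ¬ single b 3 ≤ single a j := by simp [single_le_iff, hab]
    by_cases hjn : j = n
    · subst hjn
      simp [h3, single_eq_single_iff]
    · have hn' : ¬ single a n ≤ single a j := by simp [single_le_iff]; omega
      simp [h3, hn', single_eq_single_iff, hab, hjn, hn0]
  · have hn' : ¬ single a n ≤ single b j := by simp [single_le_iff, hab]; omega
    by_cases hj3 : j = 3
    · subst hj3
      simp [hn', single_eq_single_iff]
    · have h3 : ¬ single b 3 ≤ single b j := by simp [single_le_iff]; omega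
      simp [h3, hn', single_eq_single_iff, hab.symm, hj3, hn0]

variable [Fintype σ]

theorem not_le_of_mem_cuspStandardExponents (hab : a ≠ b) {m e : σ →₀ ℕ}
    (hm : m ∈ cuspMonomialExponents a b n) (he : e ∈ cuspStandardExponents a b n) : ¬ m ≤ e := by
  intro hle
  simp only [cuspStandardExponents, cuspMonomialExponents, Finset.mem_union, Finset.mem_image,
    Finset.mem_range, Finset.mem_insert, Finset.mem_singleton, Finset.mem_filter,
    Finset.mem_univ, true_and] at he hm
  rcases hm with (rfl | rfl | rfl) | ⟨s, ⟨hsa, hsb⟩, rfl⟩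
  all_goals rcases he with ⟨j, hj, rfl⟩ | ⟨j, hj, rfl⟩
  rotate_right 2
  · simpa [hsa.symm] using Finsupp.le_def.1 hle s
  · simpa [hsb.symm] using Finsupp.le_def.1 hle s
  all_goals
    have ha := Finsupp.le_def.1 hle a
    have hb := Finsupp.le_def.1 hle b
    simp [hab, hab.symm] at ha hb <;> omega

theorem mem_cuspStandardExponents_of_forall_not_le (hab : a ≠ b) {e : σ →₀ ℕ}
    (hno : ∀ m ∈ cuspMonomialExponents a b n, ¬ m ≤ e) : e ∈ cuspStandardExponents a b n := by
  have hz : ∀ s, s ≠ a → s ≠ b → e s = 0 := fun s hsa hsb => by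
    simpa [single_le_iff] using hno (single s 1) <| Finset.mem_union_right _ <|
      Finset.mem_image_of_mem _ (by simp [hsa, hsb])
  have hea : e a < n + 1 := not_le.1 fun h => hno (single a (n + 1))
    (Finset.mem_union_left _ (by simp only [Finset.mem_insert_self])) (single_le_iff.2 h)
  have heb : e b < 4 := not_le.1 fun h => hno (single b 4)
    (Finset.mem_union_left _ (by simp only [Finset.mem_insert, Finset.mem_singleton, or_true]))
    (single_le_iff.2 h)
  have hmixed : e a = 0 ∨ e b = 0 := by
    by_contra! h
    refine hno (single a 1 + single b 1)
      (Finset.mem_union_left _ (by simp only [Finset.mem_insert, true_or, or_true])) fun s => ?_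
    by_cases hsa : s = a
    · subst hsa; simp [hab]; omega
    · by_cases hsb : s = b
      · subst hsb; simp [hsa]; omega
      · simp [Ne.symm hsa, Ne.symm hsb]
  have he_eq : e = single a (e a) + single b (e b) := by
    ext s
    by_cases hsa : s = a
    · subst hsa; simp [hab]
    · by_cases hsb : s = b
      · subst hsb; simp [hsa]
      · simp [Ne.symm hsa, Ne.symm hsb, hz s hsa hsb]
  rcases hmixed with h | h <;> rw [he_eq, h, single_zero]
  · rw [zero_add]
    exact Finset.mem_union_right _ (Finset.mem_image_of_mem _ (Finset.mem_range.2 heb))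
  · rw [add_zero]
    exact Finset.mem_union_left _ (Finset.mem_image_of_mem _ (Finset.mem_range.2 hea))

theorem exists_cuspMonomialExponents_le_iff (hab : a ≠ b) (e : σ →₀ ℕ) :
    (∃ m ∈ cuspMonomialExponents a b n, m ≤ e) ↔ e ∉ cuspStandardExponents a b n := by
  refine ⟨fun ⟨m, hm, hle⟩ he => not_le_of_mem_cuspStandardExponents hab hm he hle, fun he => ?_⟩
  by_contra! hno
  exact he (mem_cuspStandardExponents_of_forall_not_le hab hno)

theorem cuspIdeal_eq (hn : 1 ≤ n) :
    cuspIdeal a b n =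
      Ideal.span {X b ^ 3 + X a ^ n} ⊔ (cuspMonomialIdeal a b n : Ideal (MvPowerSeries σ R)) := by
  have hF : X b ^ 3 + X a ^ n ∈ (cuspIdeal a b n : Ideal (MvPowerSeries σ R)) :=
    Ideal.subset_span (Set.mem_union_left _ (Set.mem_insert _ _))
  have hxy : X a * X b ∈ (cuspIdeal a b n : Ideal (MvPowerSeries σ R)) :=
    Ideal.subset_span (Set.mem_union_left _ (Set.mem_insert_of_mem _ rfl))
  have hxy_eq : (X a * X b : MvPowerSeries σ R) = monomial (single a 1 + single b 1) 1 := by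
    rw [X_def, X_def, monomial_mul_monomial, one_mul]
  apply le_antisymm
  · refine Ideal.span_le.2 ?_
    rintro g ((rfl | rfl) | ⟨s, hs, rfl⟩)
    · exact Ideal.mem_sup_left (Ideal.mem_span_singleton_self _)
    · refine Ideal.mem_sup_right (Ideal.subset_span ⟨_, ?_, hxy_eq.symm⟩)
      simp [cuspMonomialExponents]
    · refine Ideal.mem_sup_right (Ideal.subset_span ⟨single s 1, ?_, (X_def s).symm⟩)
      exact Finset.mem_union_right _ (Finset.mem_image_of_mem _ (by simpa using hs))
  · refine sup_le (Ideal.span_le.2 (by simpa using hF)) (Ideal.span_le.2 ?_)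
    obtain ⟨n, rfl⟩ := Nat.exists_eq_add_of_le' hn
    rintro _ ⟨m, hm, rfl⟩
    simp only [cuspMonomialExponents, Finset.coe_union, Finset.coe_insert, Finset.coe_singleton,
      Finset.coe_image, Finset.coe_filter, Set.mem_union, Set.mem_insert_iff,
      Set.mem_singleton_iff, Set.mem_image, Finset.mem_univ, true_and] at hm
    change monomial m 1 ∈ cuspIdeal a b (n + 1)
    rcases hm with (rfl | rfl | rfl) | ⟨s, hs, rfl⟩
    · rw [← X_pow_eq, show (X a ^ (n + 1 + 1) : MvPowerSeries σ R)
        = X a * (X b ^ 3 + X a ^ (n + 1)) - X b ^ 2 * (X a * X b) by ring]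
      exact sub_mem (Ideal.mul_mem_left _ _ hF) (Ideal.mul_mem_left _ _ hxy)
    · rw [← hxy_eq]
      exact hxy
    · rw [← X_pow_eq, show (X b ^ 4 : MvPowerSeries σ R)
        = X b * (X b ^ 3 + X a ^ (n + 1)) - X a ^ n * (X a * X b) by ring]
      exact sub_mem (Ideal.mul_mem_left _ _ hF) (Ideal.mul_mem_left _ _ hxy)
    · rw [← X_def]
      exact Ideal.subset_span (Set.mem_union_right _ ⟨s, hs, rfl⟩)

theorem coeff_eq_zero_of_mem_cuspMonomialIdeal (hab : a ≠ b) {κ : MvPowerSeries σ R}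
    (hκ : κ ∈ cuspMonomialIdeal a b n) {e : σ →₀ ℕ} (he : e ∈ cuspStandardExponents a b n) :
    coeff e κ = 0 := by
  by_contra h
  exact (exists_cuspMonomialExponents_le_iff hab e).1
    (mem_ideal_span_monomial_image.1 hκ e h) he

theorem coeff_eq_zero_of_mem_cuspIdeal (hab : a ≠ b) (hn : 1 ≤ n) {p : MvPowerSeries σ R}
    (hp : p ∈ cuspIdeal a b n) (hp3 : coeff (single b 3) p = 0) {e : σ →₀ ℕ}
    (he : e ∈ cuspStandardExponents a b n) : coeff e p = 0 := by
  rw [cuspIdeal_eq hn, Submodule.mem_sup] at hp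
  obtain ⟨_, hF, κ, hκ, rfl⟩ := hp
  obtain ⟨g, rfl⟩ := Ideal.mem_span_singleton'.1 hF
  have h3 : single b 3 ∈ cuspStandardExponents a b n :=
    Finset.mem_union_right _ (Finset.mem_image_of_mem _ (by simp))
  rw [map_add, coeff_mul_X_pow_three_add_X_pow hab hn g h3,
    coeff_eq_zero_of_mem_cuspMonomialIdeal hab hκ h3, if_pos (Or.inl rfl), add_zero] at hp3
  rw [map_add, coeff_mul_X_pow_three_add_X_pow hab hn g he,
    coeff_eq_zero_of_mem_cuspMonomialIdeal hab hκ he, hp3, ite_self, add_zero]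

theorem linearIndependent_cuspBasis (hab : a ≠ b) (hn : 1 ≤ n) :
    LinearIndependent R fun i =>
      Ideal.Quotient.mk (cuspIdeal a b n) (monomial (cuspBasisExponent a b n i) (1 : R)) := by
  rw [Fintype.linearIndependent_iff]
  intro c hc j
  set p : MvPowerSeries σ R := ∑ i, c i • monomial (cuspBasisExponent a b n i) 1
  have hp : p ∈ cuspIdeal a b n := by
    rw [← Ideal.Quotient.eq_zero_iff_mem, ← Ideal.Quotient.mkₐ_eq_mk R, map_sum]
    simpa only [map_smul, Ideal.Quotient.mkₐ_eq_mk] using hc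
  have hcoeff (e : σ →₀ ℕ) : coeff e p = ∑ i, if e = cuspBasisExponent a b n i then c i else 0 := by
    simp [p, map_sum, coeff_monomial]
  have hp3 : coeff (single b 3) p = 0 := by
    simp [hcoeff, Ne.symm (cuspBasisExponent_ne_single_three hab _)]
  have := coeff_eq_zero_of_mem_cuspIdeal hab hn hp hp3 (cuspBasisExponent_mem j)
  simpa [hcoeff, (cuspBasisExponent_injective hab).eq_iff] using this

theorem span_cuspBasis_eq_top (hab : a ≠ b) (hn : 1 ≤ n) :
    Submodule.span R (Set.range fun i =>
      Ideal.Quotient.mk (cuspIdeal a b n) (monomial (cuspBasisExponent a b n i) (1 : R))) = ⊤ := by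
  set V := Submodule.span R (Set.range fun i =>
    Ideal.Quotient.mk (cuspIdeal a b n) (monomial (cuspBasisExponent a b n i) (1 : R)))
  have hmonomial : ∀ e ∈ cuspStandardExponents a b n,
      Ideal.Quotient.mk (cuspIdeal a b n) (monomial e (1 : R)) ∈ V := by
    intro e he
    by_cases he3 : e = single b 3
    · have hxn : cuspBasisExponent a b n ⟨n, by omega⟩ = single a n := by
        simp [cuspBasisExponent]
      rw [he3, ← X_pow_eq, mk_X_pow_three_eq_neg, X_pow_eq, ← hxn]
      exact neg_mem (Submodule.subset_span ⟨_, rfl⟩)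
    · obtain ⟨i, rfl⟩ := exists_cuspBasisExponent_eq he he3
      exact Submodule.subset_span ⟨i, rfl⟩
  refine eq_top_iff.2 fun q _ => ?_
  obtain ⟨f, rfl⟩ := Ideal.Quotient.mk_surjective q
  set L : MvPowerSeries σ R := ∑ e ∈ cuspStandardExponents a b n, coeff e f • monomial e 1
  have hL : f - L ∈ cuspIdeal a b n := by
    rw [cuspIdeal_eq hn]
    refine Ideal.mem_sup_right (mem_ideal_span_monomial_image.2 fun e he => ?_)
    refine (exists_cuspMonomialExponents_le_iff hab e).2 fun heS => he ?_
    simp [L, map_sum, coeff_monomial, heS]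
  rw [Ideal.Quotient.eq.2 hL, ← Ideal.Quotient.mkₐ_eq_mk R, map_sum]
  refine Submodule.sum_mem _ fun e he => ?_
  rw [map_smul, Ideal.Quotient.mkₐ_eq_mk]
  exact Submodule.smul_mem _ _ (hmonomial e he)

def cuspBasis (hab : a ≠ b) (hn : 1 ≤ n) :
    Module.Basis (Fin (n + 3)) R
      (MvPowerSeries σ R ⧸ (cuspIdeal a b n : Ideal (MvPowerSeries σ R))) :=
  .mk (linearIndependent_cuspBasis hab hn) (span_cuspBasis_eq_top hab hn).ge

theorem cuspBasis_apply (hab : a ≠ b) (hn : 1 ≤ n) (i : Fin (n + 3)) :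
    cuspBasis hab hn i =
      Ideal.Quotient.mk (cuspIdeal a b n) (monomial (cuspBasisExponent a b n i) (1 : R)) :=
  Module.Basis.mk_apply _ _ _

end Cusp

end MvPowerSeries

theorem Fin.range_succ_succ (r : ℕ) :
    Set.range (fun i : Fin r => i.succ.succ) = {s : Fin (r + 2) | s ≠ 0 ∧ s ≠ 1} := by
  ext s
  refine ⟨?_, fun ⟨hs0, hs1⟩ => ?_⟩
  · rintro ⟨i, rfl⟩
    exact ⟨Fin.succ_ne_zero _, fun h => Fin.succ_ne_zero i (Fin.succ_injective _ h)⟩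
  · obtain ⟨t, rfl⟩ := Fin.exists_succ_eq.2 hs0
    have ht : t ≠ 0 := by rintro rfl; exact hs1 rfl
    obtain ⟨i, rfl⟩ := Fin.exists_succ_eq.2 ht
    exact ⟨i, rfl⟩

open MvPowerSeries

/-- The local model `R/J` of a `C_{3,n}` cuspidal structure is an
`(n+3)`-dimensional `k`-vector space with basis the classes of
`1, x, x², …, xⁿ, y, y²`; in particular its multiplicity is `n + 3`. -/
theorem stmt_12 (k : Type) [Field k] (n r : ℕ) (hn : 4 ≤ n)
    (x y : MvPowerSeries (Fin (r + 2)) k) (z : Fin r → MvPowerSeries (Fin (r + 2)) k)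
    (hx : x = MvPowerSeries.X 0) (hy : y = MvPowerSeries.X 1)
    (hz : ∀ i : Fin r, z i = MvPowerSeries.X i.succ.succ)
    (J : Ideal (MvPowerSeries (Fin (r + 2)) k))
    (hJ : J = Ideal.span ({y ^ 3 + x ^ n, x * y} ∪ Set.range z)) :
    FiniteDimensional k (MvPowerSeries (Fin (r + 2)) k ⧸ J) ∧
    Module.finrank k (MvPowerSeries (Fin (r + 2)) k ⧸ J) = n + 3 ∧
    ∃ b : Module.Basis (Fin (n + 3)) k (MvPowerSeries (Fin (r + 2)) k ⧸ J),
      ∀ i : Fin (n + 3),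
        b i = if (i : ℕ) ≤ n then Ideal.Quotient.mk J (x ^ (i : ℕ))
              else if (i : ℕ) = n + 1 then Ideal.Quotient.mk J y
              else Ideal.Quotient.mk J (y ^ 2) := by
  obtain rfl : J = cuspIdeal 0 1 n := by
    rw [hJ, hx, hy, show z = X ∘ fun i => i.succ.succ from funext hz, Set.range_comp,
      Fin.range_succ_succ]
    rfl
  have hn1 : 1 ≤ n := by omega
  let B := cuspBasis (R := k) (Fin.zero_ne_one : (0 : Fin (r + 2)) ≠ 1) hn1
  refine ⟨.of_basis B, by rw [Module.finrank_eq_card_basis B, Fintype.card_fin], B, fun i => ?_⟩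
  rw [cuspBasis_apply, cuspBasisExponent, hx, hy]
  split_ifs <;> simp only [← X_pow_eq, pow_one]
end
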